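/- arXiv:1604.03924 — 2 statements merged into one kernel-verified Lean document; each statement's English description precedes it below -/
import Mathlib

section
/- Let A : X^n → T be a (possibly randomized) algorithm selecting a test statistic, and suppose A has β-approximate max-information at most k over all (possibly non-product) distributions on X^n, i.e. I^β_∞(A,n) ≤ k. Then γ(α) = max((α − β)/2^k, 0) is a valid p-value correction function for A: for every significance level α ∈ [0,1] and every distribution S over X^n, the probability (over X ~ S and the coins of A) that the selected statistic φ_i = A(X) satisfies both S ∈ H_0^(i) and p_i(φ_i(X)) ≤ γ(α) is at most α. -/
/-
Fix the selected statistic `t`. Under the null hypothesis its p-value is super-uniform: the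
outcomes whose p-value is at most `c` have probability at most `c`, because any finitely many of
them lie in the upper set `{x' | φ t x ≤ φ t x'}` of the one with the smallest statistic. Hence,
under the independent coupling `X ⊗ A(X)` (whose first marginal is `S`), the bad event has
probability at most `γ = (α - b) / 2^k`, and the max-information bound transfers this to the joint
distribution: `Pr[bad] ≤ b + 2^k γ = α`. When `α ≤ b` we have `γ = 0`, and a p-value `0` forces
the observed dataset to have mass `0`, so the bad event is null outright.
-/

open scoped ENNReal

/-- The probability that a sample from the probability mass function `μ` lands in `S`. -/
noncomputable def prob {α : Type*} (μ : PMF α) (S : Set α) : ℝ :=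
  (μ.toOuterMeasure S).toReal

/-- The independent coupling of two distributions: a pair whose components are independent
with the given marginal distributions. -/
noncomputable def indepPair {α β : Type*} (p : PMF α) (q : PMF β) : PMF (α × β) :=
  p.bind fun a => q.map fun b => (a, b)

/-- `MaxInfoLe μ b k` : the `b`-approximate max-information of the joint distribution `μ`
is at most `k` (measured in bits):  for every event `O` with `Pr[(X,Z) ∈ O] > b`,
`Pr[(X,Z) ∈ O] - b ≤ 2^k · Pr[X ⊗ Z ∈ O]`. -/
def MaxInfoLe {α β : Type*} (μ : PMF (α × β)) (b k : ℝ) : Prop :=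
  ∀ O : Set (α × β), b < prob μ O →
    prob μ O - b ≤ 2 ^ k * prob (indepPair (μ.map Prod.fst) (μ.map Prod.snd)) O

/-- The `n`-fold product (i.i.d.) distribution `P^n` on datasets of size `n`. -/
noncomputable def iidPMF {X : Type*} (P : PMF X) : (n : ℕ) → PMF (Fin n → X)
  | 0 => PMF.pure (fun i => i.elim0)
  | n + 1 => P.bind fun a => (iidPMF P n).map fun x => Fin.cons a x

/-- The joint distribution of `(X, A(X))` where `X ∼ μ` and `A` is a randomized algorithm. -/
noncomputable def jointPMF {D Y : Type*} (μ : PMF D) (A : D → PMF Y) : PMF (D × Y) :=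
  μ.bind fun x => (A x).map fun y => (x, y)

namespace PMF

variable {α : Type*}

theorem toOuterMeasure_ne_top (p : PMF α) (s : Set α) : p.toOuterMeasure s ≠ ∞ := by
  rw [toOuterMeasure_apply]
  exact p.tsum_coe_indicator_ne_top s

theorem toOuterMeasure_le_of_forall_finset {p : PMF α} {s : Set α} {c : ℝ≥0∞}
    (h : ∀ F : Finset α, ↑F ⊆ s → p.toOuterMeasure ↑F ≤ c) : p.toOuterMeasure s ≤ c := by
  classical
  rw [toOuterMeasure_apply, ENNReal.tsum_eq_iSup_sum]
  refine iSup_le fun F => ?_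
  calc ∑ x ∈ F, s.indicator p x = ∑ x ∈ F.filter (· ∈ s), p x := by
        rw [Finset.sum_filter]; rfl
    _ = p.toOuterMeasure ↑(F.filter (· ∈ s)) := (toOuterMeasure_apply_finset p _).symm
    _ ≤ c := h _ fun x hx => (Finset.mem_filter.1 hx).2

theorem toOuterMeasure_pValue_le {β : Type*} [LinearOrder β] (p : PMF α) (f : α → β)
    (c : ℝ≥0∞) :
    p.toOuterMeasure {x | p.toOuterMeasure {x' | f x ≤ f x'} ≤ c} ≤ c := by
  refine toOuterMeasure_le_of_forall_finset fun F hF => ?_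
  rcases F.eq_empty_or_nonempty with rfl | hne
  · simp
  obtain ⟨x₀, hx₀, hmin⟩ := F.exists_min_image f hne
  exact (p.toOuterMeasure.mono fun x hx => hmin x hx).trans (hF hx₀)

end PMF

theorem prob_le_iff {α : Type*} {μ : PMF α} {s : Set α} {c : ℝ} (hc : 0 ≤ c) :
    prob μ s ≤ c ↔ μ.toOuterMeasure s ≤ ENNReal.ofReal c :=
  (ENNReal.le_ofReal_iff_toReal_le (μ.toOuterMeasure_ne_top s) hc).symm

theorem jointPMF_map_fst {D Y : Type*} (μ : PMF D) (A : D → PMF Y) :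
    (jointPMF μ A).map Prod.fst = μ := by
  simp only [jointPMF, PMF.map_bind, PMF.map_comp]
  exact (congrArg μ.bind (funext fun x => PMF.map_const (A x) x)).trans (PMF.bind_pure μ)

theorem jointPMF_toOuterMeasure_eq_zero {D Y : Type*} (μ : PMF D) (A : D → PMF Y)
    {O : Set (D × Y)} (h : ∀ y, μ.toOuterMeasure {x | (x, y) ∈ O} = 0) :
    (jointPMF μ A).toOuterMeasure O = 0 := by
  simp only [PMF.toOuterMeasure_apply_eq_zero_iff, Set.disjoint_left] at h ⊢
  simp only [jointPMF, PMF.support_bind, PMF.support_map, Set.mem_iUnion, Set.mem_image]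
  rintro _ ⟨x, hx, y, -, rfl⟩
  exact h y hx

theorem indepPair_toOuterMeasure_le {α β : Type*} (p : PMF α) (q : PMF β) {O : Set (α × β)}
    {c : ℝ≥0∞} (h : ∀ b, p.toOuterMeasure {a | (a, b) ∈ O} ≤ c) :
    (indepPair p q).toOuterMeasure O ≤ c := by
  have hswap : indepPair p q = q.bind fun b => p.map fun a => (a, b) := by
    simp only [indepPair, ← PMF.bind_pure_comp]
    exact PMF.bind_comm p q _
  rw [hswap, PMF.toOuterMeasure_bind_apply]
  calc ∑' b, q b * (p.map fun a => (a, b)).toOuterMeasure O ≤ ∑' b, q b * c :=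
        ENNReal.tsum_le_tsum fun b => by
          rw [PMF.toOuterMeasure_map_apply]; gcongr; exact h b
    _ = c := by rw [ENNReal.tsum_mul_right, q.tsum_coe, one_mul]

theorem stmt_1_general {X T : Type*} {n : ℕ} (A : (Fin n → X) → PMF T)
    (φ : T → (Fin n → X) → ℝ) (H0 : T → Set (PMF (Fin n → X))) (b k : ℝ)
    (hmi : ∀ S : PMF (Fin n → X), MaxInfoLe (jointPMF S A) b k)
    (α : ℝ) (hα0 : 0 ≤ α) (S : PMF (Fin n → X)) :
    prob (jointPMF S A)
      {p : (Fin n → X) × T |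
        S ∈ H0 p.2 ∧
        prob S {x | φ p.2 p.1 ≤ φ p.2 x} ≤ max ((α - b) / 2 ^ k) 0} ≤ α := by
  have h2k : (0 : ℝ) < 2 ^ k := by positivity
  set γ := max ((α - b) / 2 ^ k) 0 with hγdef
  set O : Set ((Fin n → X) × T) := {p | S ∈ H0 p.2 ∧ prob S {x | φ p.2 p.1 ≤ φ p.2 x} ≤ γ}
  have hγ0 : 0 ≤ γ := le_max_right _ _
  have hfiber : ∀ t, S.toOuterMeasure {x | (x, t) ∈ O} ≤ ENNReal.ofReal γ := fun t =>
    (S.toOuterMeasure.mono fun _ hx => (prob_le_iff hγ0).1 hx.2).trans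
      (S.toOuterMeasure_pValue_le (φ t) _)
  rcases le_or_gt α b with hαb | hbα
  · have hγ : γ = 0 :=
      max_eq_right (div_nonpos_of_nonpos_of_nonneg (sub_nonpos.2 hαb) h2k.le)
    have hnull : (jointPMF S A).toOuterMeasure O = 0 :=
      jointPMF_toOuterMeasure_eq_zero S A fun t => by simpa [hγ] using hfiber t
    simpa [prob, hnull] using hα0
  · have hind :
        prob (indepPair ((jointPMF S A).map Prod.fst) ((jointPMF S A).map Prod.snd)) O ≤ γ := by
      rw [prob_le_iff hγ0, jointPMF_map_fst]
      exact indepPair_toOuterMeasure_le _ _ hfiber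
    have hγ : 2 ^ k * γ = α - b := by
      rw [hγdef, max_eq_left (div_pos (sub_pos.2 hbα) h2k).le]; field_simp
    by_contra! hlt
    have := hmi S O (hbα.trans hlt)
    have := mul_le_mul_of_nonneg_left hind h2k.le
    linarith

/-- If the selection procedure `A` has `b`-approximate max-information at most
`k` over all (possibly non-product) distributions on `X^n`, then `γ(α) = max ((α - b)/2^k) 0`
is a valid p-value correction function: for every `α ∈ [0,1]` and every distribution `S` over
`X^n`, the probability (over `X ∼ S` and the coins of `A`) that the selected statistic `φ (A X)`
has `S` in its null hypothesis and p-value at most `γ(α)` is at most `α`.  Here the p-value of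
the selected test statistic `φ t` at the observed value `φ t x` is `Pr_{x' ∼ S}[φ t x' ≥ φ t x]`. -/
theorem stmt_1 {X T : Type*} {n : ℕ} (A : (Fin n → X) → PMF T)
    (φ : T → (Fin n → X) → ℝ) (H0 : T → Set (PMF (Fin n → X))) (b k : ℝ)
    (hmi : ∀ S : PMF (Fin n → X), MaxInfoLe (jointPMF S A) b k)
    (α : ℝ) (hα0 : 0 ≤ α) (hα1 : α ≤ 1) (S : PMF (Fin n → X)) :
    prob (jointPMF S A)
      {p : (Fin n → X) × T |
        S ∈ H0 p.2 ∧
        prob S {x | φ p.2 p.1 ≤ φ p.2 x} ≤ max ((α - b) / 2 ^ k) 0} ≤ α :=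
  stmt_1_general A φ H0 b k hmi α hα0 S
end

section
/- Let X and Y be jointly distributed discrete random variables, with X taking values in a finite set Σ. If I_∞^β(X;Y) ≤ k for some k > 0 and 0 ≤ β ≤ 3(1 − 2^{−k})/20, then the mutual information measured in nats satisfies I(X;Y) ≤ 2k·ln(2) + (2β · log₂(|Σ|/(2β))) / (1 − 2^{−k}). -/
open scoped ENNReal

/-- The mutual information, measured in nats, between the two components of a joint
distribution `μ`. -/
noncomputable def mutualInfoNats {α β : Type*} (μ : PMF (α × β)) : ℝ :=
  ∑' q : α × β, (μ q).toReal *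
    Real.log ((μ q).toReal / (((μ.map Prod.fst) q.1).toReal * ((μ.map Prod.snd) q.2).toReal))

/-!
Let `O` be the set of outcomes `(x, y)` with `μ(x, y) > 2^{2k} μ_X(x) μ_Y(y)`. Off `O` the
summand of the mutual information is at most `μ(x, y) · 2k ln 2`. Applying the max-information
bound to `O` itself gives `Pr[O] - β ≤ 2^k · 2^{-2k} Pr[O]`, so `Pr[O] ≤ m := β / (1 - 2^{-k})`.
On `O` the summand is at most `μ(x, y) · (-ln μ_X(x))`; grouping by `x` with fibre masses
`c_x ≤ μ_X(x)` bounds this part by the entropy `∑ c_x (-ln c_x) ≤ m ln(|σ| / m)`, which is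
at most the stated term because `|σ| / m ≤ 2 · |σ| / (2β)` and `ln(|σ| / (2β)) ≥ 1`.
-/

open Real

namespace PMF
variable {α β : Type*}

lemma summable_toReal (p : PMF α) : Summable fun a => (p a).toReal :=
  ENNReal.summable_toReal p.tsum_coe_ne_top

lemma map_fst_apply (μ : PMF (α × β)) (a : α) : μ.map Prod.fst a = ∑' b, μ (a, b) := by
  simp [map_apply, ENNReal.tsum_prod', ENNReal.tsum_comm (α := α)]

lemma map_snd_apply (μ : PMF (α × β)) (b : β) : μ.map Prod.snd b = ∑' a, μ (a, b) := by
  simp [map_apply, ENNReal.tsum_prod']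

lemma apply_le_map_fst (μ : PMF (α × β)) (q : α × β) : μ q ≤ μ.map Prod.fst q.1 := by
  rw [map_fst_apply]
  exact ENNReal.le_tsum q.2

lemma apply_le_map_snd (μ : PMF (α × β)) (q : α × β) : μ q ≤ μ.map Prod.snd q.2 := by
  rw [map_snd_apply]
  exact ENNReal.le_tsum q.1

lemma toReal_map_fst_apply (μ : PMF (α × β)) (a : α) :
    (μ.map Prod.fst a).toReal = ∑' b, (μ (a, b)).toReal := by
  rw [map_fst_apply, ENNReal.tsum_toReal_eq fun b => μ.apply_ne_top _]

lemma toReal_apply_le_map_fst (μ : PMF (α × β)) (q : α × β) :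
    (μ q).toReal ≤ (μ.map Prod.fst q.1).toReal :=
  ENNReal.toReal_mono (apply_ne_top _ _) (μ.apply_le_map_fst q)

lemma toReal_apply_le_map_snd (μ : PMF (α × β)) (q : α × β) :
    (μ q).toReal ≤ (μ.map Prod.snd q.2).toReal :=
  ENNReal.toReal_mono (apply_ne_top _ _) (μ.apply_le_map_snd q)

end PMF

section Prob
variable {α β : Type*}

lemma prob_eq_tsum_indicator (p : PMF α) (S : Set α) :
    prob p S = ∑' a, S.indicator (fun a => (p a).toReal) a := by
  rw [prob, PMF.toOuterMeasure_apply, ENNReal.tsum_toReal_eq]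
  · exact tsum_congr fun a => (Set.indicator_comp_of_zero ENNReal.toReal_zero).symm ▸ rfl
  · exact fun a => ne_top_of_le_ne_top (p.apply_ne_top a) (Set.indicator_le_self _ _ a)

lemma prob_le_one (p : PMF α) (S : Set α) : prob p S ≤ 1 := by
  have : p.toOuterMeasure S ≤ 1 := by
    simpa [PMF.toOuterMeasure_apply] using p.toOuterMeasure.mono (Set.subset_univ S)
  exact ENNReal.toReal_le_of_le_ofReal zero_le_one (by simpa using this)

lemma prob_le_mul_prob {p q : PMF α} {S : Set α} {c : ℝ}
    (h : ∀ a ∈ S, (q a).toReal ≤ c * (p a).toReal) : prob q S ≤ c * prob p S := by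
  rw [prob_eq_tsum_indicator, prob_eq_tsum_indicator, ← tsum_mul_left]
  refine (q.summable_toReal.indicator S).tsum_le_tsum (fun a => ?_)
    ((p.summable_toReal.indicator S).mul_left c)
  by_cases ha : a ∈ S <;> simp [ha, h]

lemma indepPair_apply (p : PMF α) (q : PMF β) (a : α) (b : β) :
    indepPair p q (a, b) = p a * q b := by
  rw [indepPair, PMF.bind_apply, tsum_eq_single a, PMF.map_apply, tsum_eq_single b, if_pos rfl]
  · intro b' hb
    simp [Ne.symm hb]
  · intro a' ha
    simp [PMF.map_apply, Ne.symm ha]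

end Prob

lemma summable_mul_comp_fst {α β : Type*} [Fintype α] {f : α × β → ℝ} (hf : Summable f)
    (w : α → ℝ) : Summable fun q => f q * w q.1 := by
  refine Summable.of_norm_bounded (hf.norm.mul_right (∑ a, ‖w a‖)) fun q => ?_
  rw [norm_mul]
  exact mul_le_mul_of_nonneg_left
    (Finset.single_le_sum (fun a _ => norm_nonneg (w a)) (Finset.mem_univ q.1)) (norm_nonneg _)

lemma tsum_mul_comp_fst {α β : Type*} [Fintype α] {f : α × β → ℝ} (hf : Summable f)
    (w : α → ℝ) : ∑' q, f q * w q.1 = ∑ a, (∑' b, f (a, b)) * w a := by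
  have hfw := summable_mul_comp_fst hf w
  rw [hfw.tsum_prod' fun a => hfw.prod_factor a, tsum_fintype]
  simp only [tsum_mul_right]

lemma negMulLog_le_sub_sub_mul_log {c t : ℝ} (hc : 0 ≤ c) (ht : 0 < t) :
    negMulLog c ≤ t - c - c * log t := by
  rcases hc.eq_or_lt with rfl | hc
  · simpa using ht.le
  · have h := mul_le_mul_of_nonneg_left (log_le_sub_one_of_pos (div_pos ht hc)) hc.le
    have h' : c * (t / c - 1) = t - c := by field_simp
    rw [log_div ht.ne' hc.ne', h'] at h
    rw [negMulLog]
    linarith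

lemma mul_neg_log_le_negMulLog {c y : ℝ} (hc : 0 ≤ c) (hcy : c ≤ y) :
    c * -log y ≤ negMulLog c := by
  rcases hc.eq_or_lt with rfl | hc
  · simp
  · rw [negMulLog, neg_mul, mul_neg, neg_le_neg_iff]
    exact mul_le_mul_of_nonneg_left (log_le_log hc hcy) hc.le

/-- `hm` keeps `m` in the range `m ≤ n / e` where `x ↦ x log (n / x)` is increasing. -/
lemma sum_negMulLog_le {ι : Type*} [Fintype ι] {c : ι → ℝ} {m : ℝ} (hc : ∀ i, 0 ≤ c i)
    (hsum : ∑ i, c i ≤ m) (hm : m * exp 1 ≤ Fintype.card ι) :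
    ∑ i, negMulLog (c i) ≤ m * log (Fintype.card ι / m) := by
  set n : ℝ := (Fintype.card ι : ℝ)
  set s := ∑ i, c i
  have hs : 0 ≤ s := Finset.sum_nonneg fun i _ => hc i
  rcases (hs.trans hsum).eq_or_lt with rfl | hm0
  · have hc0 : ∀ i, c i = 0 := fun i =>
      (Finset.sum_eq_zero_iff_of_nonneg fun i _ => hc i).1 (le_antisymm hsum hs) i
        (Finset.mem_univ i)
    simp [hc0]
  have hn : 0 < n := lt_of_lt_of_le (by positivity) hm
  have hlog : 1 ≤ log (n / m) := by
    rw [le_log_iff_exp_le (by positivity), le_div_iff₀ hm0, mul_comm]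
    exact hm
  have hlog_t : log (m / n) = -log (n / m) := by rw [← log_inv, inv_div]
  calc ∑ i, negMulLog (c i) ≤ ∑ i, (m / n - c i - c i * log (m / n)) :=
        Finset.sum_le_sum fun i _ => negMulLog_le_sub_sub_mul_log (hc i) (by positivity)
    _ = (m - s) + s * log (n / m) := by
        simp only [Finset.sum_sub_distrib, ← Finset.sum_mul, Finset.sum_const,
          Finset.card_univ, nsmul_eq_mul, hlog_t]
        field_simp
        ring
    _ ≤ (m - s) * log (n / m) + s * log (n / m) := by
        gcongr
        exact le_mul_of_one_le_right (by linarith) hlog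
    _ = m * log (n / m) := by ring

lemma log_two_add_le_two_mul_div_log_two {L : ℝ} (hL : 1 ≤ L) : log 2 + L ≤ 2 * L / log 2 := by
  have h2 := log_two_lt_d9
  have h2' := log_two_gt_d9
  rw [le_div_iff₀ (by linarith)]
  nlinarith

lemma div_mul_log_div_div_le {β c n : ℝ} (hβ : 0 ≤ β) (hc : 0 < c) (hc1 : c ≤ 1)
    (hn : 2 * β * exp 1 ≤ n) :
    β / c * log (n / (β / c)) ≤ 2 * β * logb 2 (n / (2 * β)) / c := by
  rcases hβ.eq_or_lt with rfl | hβ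
  · simp
  have hn0 : 0 < n := lt_of_lt_of_le (by positivity) hn
  have hu : 1 ≤ log (n / (2 * β)) := by
    rw [le_log_iff_exp_le (by positivity), le_div_iff₀ (by positivity), mul_comm]
    exact hn
  have hlog : log (n / (β / c)) ≤ log 2 + log (n / (2 * β)) := by
    rw [← log_mul two_ne_zero (by positivity)]
    apply log_le_log (by positivity)
    rw [div_div_eq_mul_div, show 2 * (n / (2 * β)) = n / β by field_simp]
    exact div_le_div_of_nonneg_right (mul_le_of_le_one_right hn0.le hc1) hβ.le
  calc β / c * log (n / (β / c)) ≤ β / c * (2 * log (n / (2 * β)) / log 2) :=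
        mul_le_mul_of_nonneg_left (hlog.trans (log_two_add_le_two_mul_div_log_two hu))
          (by positivity)
    _ = 2 * β * logb 2 (n / (2 * β)) / c := by rw [logb]; ring

lemma mul_log_div_mul_le_mul_neg_log {x y z : ℝ} (hx : 0 ≤ x) (hxy : x ≤ y) (hxz : x ≤ z) :
    x * log (x / (y * z)) ≤ x * -log y := by
  rcases hx.eq_or_lt with rfl | hx
  · simp
  have hy := hx.trans_le hxy
  have hz := hx.trans_le hxz
  rw [log_div hx.ne' (by positivity), log_mul hy.ne' hz.ne']
  have := log_le_log hx hxz
  exact mul_le_mul_of_nonneg_left (by linarith) hx.le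

lemma mul_log_div_le_mul_log {x d r : ℝ} (hx : 0 ≤ x) (hr : 0 < r) (h : x ≤ r * d) :
    x * log (x / d) ≤ x * log r := by
  rcases hx.eq_or_lt with rfl | hx
  · simp
  have hd : 0 < d := pos_of_mul_pos_right (hx.trans_le h) hr.le
  exact mul_le_mul_of_nonneg_left
    (log_le_log (div_pos hx hd) ((div_le_iff₀ hd).2 h)) hx.le

lemma neg_mul_le_mul_log_div_mul {x y z : ℝ} (hx : 0 ≤ x) (hxy : x ≤ y) (hxz : x ≤ z) :
    -(y * z) ≤ x * log (x / (y * z)) := by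
  rcases hx.eq_or_lt with rfl | hx
  · simpa using mul_nonneg hxy hxz
  have hd : 0 < y * z := mul_pos (hx.trans_le hxy) (hx.trans_le hxz)
  have h := mul_le_mul_of_nonneg_left (self_sub_one_le_mul_log (div_nonneg hx.le hd.le)) hd.le
  rw [mul_sub, mul_div_cancel₀ _ hd.ne', mul_one, ← mul_assoc, mul_div_cancel₀ _ hd.ne'] at h
  linarith

section HeavySet
variable {α β : Type*}

lemma toReal_indepPair_map_apply (μ : PMF (α × β)) (q : α × β) :
    (indepPair (μ.map Prod.fst) (μ.map Prod.snd) q).toReal =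
      (μ.map Prod.fst q.1).toReal * (μ.map Prod.snd q.2).toReal := by
  rw [← ENNReal.toReal_mul, ← indepPair_apply]

def heavySet (μ : PMF (α × β)) (r : ℝ) : Set (α × β) :=
  {q | r * ((μ.map Prod.fst q.1).toReal * (μ.map Prod.snd q.2).toReal) < (μ q).toReal}

lemma prob_heavySet_le {μ : PMF (α × β)} {b k : ℝ} (hmi : MaxInfoLe μ b k) (hk : 0 < k) :
    prob μ (heavySet μ (2 ^ (2 * k))) ≤ b / (1 - 2 ^ (-k)) := by
  set O := heavySet μ (2 ^ (2 * k))
  have hk1 : (2 : ℝ) ^ (-k) < 1 := rpow_lt_one_of_one_lt_of_neg one_lt_two (neg_neg_of_pos hk)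
  have hO : 0 ≤ prob μ O := ENNReal.toReal_nonneg
  rw [le_div_iff₀ (by linarith)]
  by_cases hb : prob μ O ≤ b
  · nlinarith [rpow_pos_of_pos two_pos (-k)]
  have hν : prob (indepPair (μ.map Prod.fst) (μ.map Prod.snd)) O ≤
      2 ^ (-(2 * k)) * prob μ O := by
    refine prob_le_mul_prob fun q hq => ?_
    rw [toReal_indepPair_map_apply, rpow_neg zero_le_two, ← div_eq_inv_mul,
      le_div_iff₀ (by positivity), mul_comm]
    exact hq.le
  have hpow : (2 : ℝ) ^ k * 2 ^ (-(2 * k)) = 2 ^ (-k) := by rw [← rpow_add two_pos]; ring_nf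
  nlinarith [hmi O (not_le.1 hb), mul_le_mul_of_nonneg_left hν (by positivity : (0 : ℝ) ≤ 2 ^ k)]

lemma summable_mutualInfo_density [Fintype α] (μ : PMF (α × β)) :
    Summable fun q : α × β => (μ q).toReal *
      log ((μ q).toReal / ((μ.map Prod.fst q.1).toReal * (μ.map Prod.snd q.2).toReal)) := by
  have hH := summable_mul_comp_fst μ.summable_toReal fun a => -log (μ.map Prod.fst a).toReal
  refine Summable.of_norm_bounded
    (hH.abs.add (indepPair (μ.map Prod.fst) (μ.map Prod.snd)).summable_toReal) fun q => ?_
  have hp : 0 ≤ (μ q).toReal := ENNReal.toReal_nonneg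
  have hupper := mul_log_div_mul_le_mul_neg_log hp (μ.toReal_apply_le_map_fst q)
    (μ.toReal_apply_le_map_snd q)
  have hlower := neg_mul_le_mul_log_div_mul hp (μ.toReal_apply_le_map_fst q)
    (μ.toReal_apply_le_map_snd q)
  have hd : 0 ≤ (μ.map Prod.fst q.1).toReal * (μ.map Prod.snd q.2).toReal := by positivity
  rw [toReal_indepPair_map_apply, Real.norm_eq_abs, abs_le]
  constructor <;> linarith [le_abs_self ((μ q).toReal * -log (μ.map Prod.fst q.1).toReal),
    abs_nonneg ((μ q).toReal * -log (μ.map Prod.fst q.1).toReal)]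

lemma tsum_indicator_mul_neg_log_map_fst_le [Fintype α] (μ : PMF (α × β)) {O : Set (α × β)}
    {m : ℝ} (hO : prob μ O ≤ m) (hm : m * exp 1 ≤ Fintype.card α) :
    ∑' q, O.indicator (fun q => (μ q).toReal * -log (μ.map Prod.fst q.1).toReal) q ≤
      m * log (Fintype.card α / m) := by
  set p : α × β → ℝ := fun q => (μ q).toReal
  have hs : Summable (O.indicator p) := μ.summable_toReal.indicator O
  have hp : ∀ q, 0 ≤ O.indicator p q := Set.indicator_nonneg fun q _ => ENNReal.toReal_nonneg
  set c : α → ℝ := fun a => ∑' b, O.indicator p (a, b)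
  have hc : ∀ a, 0 ≤ c a := fun a => tsum_nonneg fun b => hp (a, b)
  have hcsum : ∑ a, c a = prob μ O := by
    rw [prob_eq_tsum_indicator, hs.tsum_prod' fun a => hs.prod_factor a, tsum_fintype]
  have hcP : ∀ a, c a ≤ (μ.map Prod.fst a).toReal := fun a => by
    rw [PMF.toReal_map_fst_apply]
    exact (hs.prod_factor a).tsum_le_tsum
      (fun b => Set.indicator_le_self' (fun q _ => ENNReal.toReal_nonneg) (a, b))
      (μ.summable_toReal.prod_factor a)
  simp only [Set.indicator_mul_left]
  refine (tsum_mul_comp_fst hs fun a => -log (μ.map Prod.fst a).toReal).trans_le ?_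
  calc ∑ a, c a * -log (μ.map Prod.fst a).toReal ≤ ∑ a, negMulLog (c a) :=
        Finset.sum_le_sum fun a _ => mul_neg_log_le_negMulLog (hc a) (hcP a)
    _ ≤ m * log (Fintype.card α / m) := sum_negMulLog_le hc (hcsum ▸ hO) hm

lemma mutualInfoNats_le_log_add [Fintype α] (μ : PMF (α × β)) {r m : ℝ} (hr : 1 ≤ r)
    (hO : prob μ (heavySet μ r) ≤ m) (hm : m * exp 1 ≤ Fintype.card α) :
    mutualInfoNats μ ≤ log r + m * log (Fintype.card α / m) := by
  set O := heavySet μ r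
  set p : α × β → ℝ := fun q => (μ q).toReal
  set H : α × β → ℝ := fun q => (μ q).toReal * -log (μ.map Prod.fst q.1).toReal
  have hle : ∀ q, (μ q).toReal *
      log ((μ q).toReal / ((μ.map Prod.fst q.1).toReal * (μ.map Prod.snd q.2).toReal)) ≤
      O.indicator H q + Oᶜ.indicator p q * log r := fun q => by
    have hp : 0 ≤ (μ q).toReal := ENNReal.toReal_nonneg
    by_cases hq : q ∈ O
    · simpa [hq, H] using mul_log_div_mul_le_mul_neg_log hp (μ.toReal_apply_le_map_fst q)
        (μ.toReal_apply_le_map_snd q)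
    · simpa [hq, p] using mul_log_div_le_mul_log hp (by linarith) (not_lt.1 hq)
  have hH : Summable (O.indicator H) :=
    (summable_mul_comp_fst μ.summable_toReal fun a => -log (μ.map Prod.fst a).toReal).indicator O
  have hp : Summable fun q => Oᶜ.indicator p q * log r :=
    (μ.summable_toReal.indicator Oᶜ).mul_right _
  calc mutualInfoNats μ ≤ ∑' q, (O.indicator H q + Oᶜ.indicator p q * log r) :=
        (summable_mutualInfo_density μ).tsum_le_tsum hle (hH.add hp)
    _ = ∑' q, O.indicator H q + prob μ Oᶜ * log r := by
        rw [hH.tsum_add hp, tsum_mul_right, prob_eq_tsum_indicator]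
    _ ≤ m * log (Fintype.card α / m) + 1 * log r :=
        add_le_add (tsum_indicator_mul_neg_log_map_fst_le μ hO hm)
          (mul_le_mul_of_nonneg_right (prob_le_one _ _) (log_nonneg hr))
    _ = log r + m * log (Fintype.card α / m) := by ring

end HeavySet

/-- Let `X` and `Y` be jointly distributed discrete random variables (with
joint distribution `μ`), where `X` takes values in a finite set `σ`.  If `I_∞^β(X;Y) ≤ k` for
some `k > 0` and `0 ≤ β ≤ 3(1 - 2^{-k})/20`, then the mutual information measured in nats
satisfies `I(X;Y) ≤ 2k·ln 2 + (2β · log₂(|σ|/(2β))) / (1 - 2^{-k})`. -/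
theorem stmt_3 {σ Y : Type*} [Fintype σ] (μ : PMF (σ × Y)) (k β : ℝ)
    (hk : 0 < k) (hβ0 : 0 ≤ β) (hβ : β ≤ 3 * (1 - 2 ^ (-k)) / 20)
    (hmi : MaxInfoLe μ β k) :
    mutualInfoNats μ ≤
      2 * k * Real.log 2 +
        (2 * β * Real.logb 2 ((Fintype.card σ : ℝ) / (2 * β))) / (1 - 2 ^ (-k)) := by
  obtain ⟨q, -⟩ := μ.support_nonempty
  have hcard : (1 : ℝ) ≤ Fintype.card σ := by exact_mod_cast Fintype.card_pos_iff.2 ⟨q.1⟩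
  have hc : 0 < 1 - (2 : ℝ) ^ (-k) :=
    sub_pos.2 (rpow_lt_one_of_one_lt_of_neg one_lt_two (neg_neg_of_pos hk))
  have hc1 : 1 - (2 : ℝ) ^ (-k) ≤ 1 := sub_le_self _ (by positivity)
  have hm : β / (1 - 2 ^ (-k)) ≤ 3 / 20 := by rw [div_le_iff₀ hc]; linarith
  calc mutualInfoNats μ ≤ log (2 ^ (2 * k)) +
        β / (1 - 2 ^ (-k)) * log (Fintype.card σ / (β / (1 - 2 ^ (-k)))) :=
        mutualInfoNats_le_log_add μ (one_le_rpow one_le_two (by positivity))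
          (prob_heavySet_le hmi hk) (by nlinarith [div_nonneg hβ0 hc.le, exp_one_lt_d9])
    _ ≤ _ := by
        rw [log_rpow two_pos]
        exact add_le_add le_rfl (div_mul_log_div_div_le hβ0 hc hc1 (by nlinarith [exp_one_lt_d9]))
end
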